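/- arXiv:2008.04804 — 6 statements merged into one kernel-verified Lean document; each statement's English description precedes it below -/
import Mathlib

section
/- Let $\mathcal{F}$ be an antichain of finite subsets of $\mathbb{N}$, i.e., for all distinct $A, B \in \mathcal{F}$ we have $A \not\subseteq B$. Then $\liminf_{n \to \infty} |\mathcal{F} \cap 2^{[n]}| \cdot \frac{n \ln n}{2^n} = 0$, where $\mathcal{F} \cap 2^{[n]}$ denotes the collection of members of $\mathcal{F}$ that are subsets of $[n] = \{1, \dots, n\}$. -/
/-!
Write `F n` for the members of `𝓕` inside `[n]` and `U n` for the subsets of `[n]` that properly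
contain a member of `𝓕`. Since `𝓕` is an antichain, `F n` and `U n` are disjoint, so
`|F n| + |U n| ≤ 2 ^ n`. Every `B ∈ U n ∪ F n` yields `B ∪ {n + 1} ∈ U (n + 1)`, hence
`|U (n + 1)| ≥ 2 |U n| + |F n|`: the ratio `|U n| / 2 ^ n` grows by at least `|F n| / 2 ^ (n + 1)`
at each step while staying below `1`, so `∑ |F n| / 2 ^ n` converges. As `∑ 1 / (n ln n)` diverges,
`|F n| n ln n / 2 ^ n` cannot stay above any positive constant.
-/

open Filter Finset

namespace Real

theorem not_summable_inv_natCast_mul_log : ¬ Summable fun n : ℕ => ((n : ℝ) * log n)⁻¹ := by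
  have h_condensed : (fun k : ℕ => (2 : ℝ) ^ k * (((2 ^ k : ℕ) : ℝ) * log (2 ^ k : ℕ))⁻¹) =
      fun k : ℕ => (log 2)⁻¹ * (k : ℝ)⁻¹ := by
    funext k
    rw [Nat.cast_pow, Nat.cast_ofNat, log_pow, mul_inv, mul_inv_cancel_left₀ (by positivity),
      mul_inv, mul_comm]
  rw [← summable_condensed_iff_of_eventually_nonneg, h_condensed,
    summable_mul_left_iff (inv_ne_zero (log_pos one_lt_two).ne')]
  · exact not_summable_natCast_inv
  · exact Eventually.of_forall fun n => by positivity
  · filter_upwards [eventually_ge_atTop 2] with k hk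
    have hk : (2 : ℝ) ≤ k := by exact_mod_cast hk
    have hlog : 0 < log k := log_pos (by linarith)
    push_cast
    gcongr <;> linarith

end Real

theorem liminf_mul_eq_zero_of_summable_of_not_summable_inv {u w : ℕ → ℝ} (hu0 : ∀ n, 0 ≤ u n)
    (hu : Summable u) (hw0 : ∀ n, 0 ≤ w n) (hw : ¬ Summable fun n => (w n)⁻¹) :
    atTop.liminf (fun n => u n * w n) = 0 := by
  have huw0 : ∀ n, 0 ≤ u n * w n := fun n => mul_nonneg (hu0 n) (hw0 n)
  have hfrequently : ∀ ε > 0, ∃ᶠ n in atTop, u n * w n ≤ ε := by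
    intro ε hε
    by_contra h
    rw [not_frequently] at h
    refine hw ((hu.mul_left ε⁻¹).of_norm_bounded_eventually_nat ?_)
    filter_upwards [h] with n hn
    rw [not_le] at hn
    have hwn : 0 < w n := pos_of_mul_pos_right (hε.trans hn) (hu0 n)
    rw [Real.norm_of_nonneg (inv_nonneg.2 (hw0 n)), inv_le_iff_one_le_mul₀ hwn]
    field_simp
    linarith
  refine le_antisymm (le_of_forall_pos_le_add fun ε hε => ?_) ?_
  · rw [zero_add]
    exact liminf_le_of_frequently_le (hfrequently ε hε) (isBoundedUnder_of ⟨0, huw0⟩)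
  · exact le_liminf_of_le (IsCoboundedUnder.of_frequently_le (hfrequently 1 one_pos))
      (Eventually.of_forall huw0)

theorem summable_div_two_pow_of_two_mul_add_le {u v : ℕ → ℕ}
    (hrec : ∀ n, 2 * u n + v n ≤ u (n + 1)) (hu : ∀ n, u n ≤ 2 ^ n) :
    Summable fun n => (v n : ℝ) / 2 ^ n := by
  have hpartial : ∀ N, ∑ n ∈ range N, (v n : ℝ) / 2 ^ (n + 1) ≤ u N / 2 ^ N := by
    intro N
    induction N with
    | zero => simp
    | succ N ih =>
      have hstep : (u N : ℝ) / 2 ^ N + v N / 2 ^ (N + 1) = (2 * u N + v N) / 2 ^ (N + 1) := by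
        rw [pow_succ]
        field_simp
      rw [sum_range_succ]
      calc _ ≤ (u N : ℝ) / 2 ^ N + v N / 2 ^ (N + 1) := by gcongr
        _ ≤ u (N + 1) / 2 ^ (N + 1) := by
          rw [hstep]
          gcongr
          exact_mod_cast hrec N
  have hhalf : Summable fun n => (v n : ℝ) / 2 ^ (n + 1) :=
    summable_of_sum_range_le (fun n => by positivity) fun N =>
      (hpartial N).trans (div_le_one_of_le₀ (by exact_mod_cast hu N) (by positivity))
  refine (hhalf.mul_left 2).congr fun n => ?_
  rw [pow_succ]
  field_simp

section Antichain

variable {α : Type*} (𝓕 : Set (Finset α))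

open Classical in
noncomputable def membersWithin (s : Finset α) : Finset (Finset α) :=
  {B ∈ s.powerset | B ∈ 𝓕}

open Classical in
noncomputable def properSupersetsWithin (s : Finset α) : Finset (Finset α) :=
  {B ∈ s.powerset | ∃ A ∈ 𝓕, A ⊂ B}

variable {𝓕}

theorem mem_membersWithin {s B : Finset α} : B ∈ membersWithin 𝓕 s ↔ B ⊆ s ∧ B ∈ 𝓕 := by
  simp [membersWithin]

theorem mem_properSupersetsWithin {s B : Finset α} :
    B ∈ properSupersetsWithin 𝓕 s ↔ B ⊆ s ∧ ∃ A ∈ 𝓕, A ⊂ B := by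
  simp [properSupersetsWithin]

theorem ncard_setOf_mem_and_subset (s : Finset α) :
    {A | A ∈ 𝓕 ∧ A ⊆ s}.ncard = #(membersWithin 𝓕 s) := by
  rw [← Set.ncard_coe_finset]
  congr
  ext B
  simp [mem_membersWithin, and_comm]

theorem disjoint_membersWithin_properSupersetsWithin (h𝓕 : IsAntichain (· ⊆ ·) 𝓕)
    (s : Finset α) : Disjoint (membersWithin 𝓕 s) (properSupersetsWithin 𝓕 s) := by
  rw [disjoint_left]
  intro B hB hB'
  obtain ⟨A, hA, hAB⟩ := (mem_properSupersetsWithin.1 hB').2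
  exact h𝓕 hA (mem_membersWithin.1 hB).2 hAB.ne hAB.subset

theorem card_membersWithin_add_card_properSupersetsWithin_le [DecidableEq α]
    (h𝓕 : IsAntichain (· ⊆ ·) 𝓕) (s : Finset α) :
    #(membersWithin 𝓕 s) + #(properSupersetsWithin 𝓕 s) ≤ 2 ^ #s := by
  rw [← card_union_of_disjoint (disjoint_membersWithin_properSupersetsWithin h𝓕 s),
    ← card_powerset]
  exact card_le_card (union_subset (fun B hB => mem_powerset.2 (mem_membersWithin.1 hB).1)
    fun B hB => mem_powerset.2 (mem_properSupersetsWithin.1 hB).1)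

theorem two_mul_card_properSupersetsWithin_add_card_membersWithin_le
    [DecidableEq α] (h𝓕 : IsAntichain (· ⊆ ·) 𝓕) {x : α} {s : Finset α} (hx : x ∉ s) :
    2 * #(properSupersetsWithin 𝓕 s) + #(membersWithin 𝓕 s) ≤
      #(properSupersetsWithin 𝓕 (insert x s)) := by
  set P := properSupersetsWithin 𝓕 s
  set M := membersWithin 𝓕 s
  have hsubset : ∀ B ∈ P ∪ M, B ⊆ s := by
    simp only [mem_union, mem_properSupersetsWithin, mem_membersWithin, P, M]
    tauto
  have hinj : Set.InjOn (insert x) ↑(P ∪ M) := insert_erase_invOn.2.injOn.mono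
    fun B hB => notMem_mono (hsubset B hB) hx
  have hcard_image : #((P ∪ M).image (insert x)) = #P + #M := by
    rw [card_image_of_injOn hinj,
      card_union_of_disjoint (disjoint_membersWithin_properSupersetsWithin h𝓕 s).symm]
  have hdisj : Disjoint P ((P ∪ M).image (insert x)) := by
    rw [disjoint_left]
    intro B hB hB'
    obtain ⟨C, -, rfl⟩ := mem_image.1 hB'
    exact hx ((mem_properSupersetsWithin.1 hB).1 (mem_insert_self x C))
  have hsub : P ∪ (P ∪ M).image (insert x) ⊆ properSupersetsWithin 𝓕 (insert x s) := by
    intro B hB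
    rw [mem_properSupersetsWithin]
    rcases mem_union.1 hB with hB | hB
    · obtain ⟨hBs, hA⟩ := mem_properSupersetsWithin.1 hB
      exact ⟨hBs.trans (subset_insert x s), hA⟩
    · obtain ⟨C, hC, rfl⟩ := mem_image.1 hB
      refine ⟨insert_subset_insert x (hsubset C hC), ?_⟩
      rcases mem_union.1 hC with hC | hC
      · obtain ⟨A, hA, hAC⟩ := (mem_properSupersetsWithin.1 hC).2
        exact ⟨A, hA, hAC.trans_subset (subset_insert x C)⟩
      · exact ⟨C, (mem_membersWithin.1 hC).2,
          ssubset_insert (notMem_mono (hsubset C (mem_union_right P hC)) hx)⟩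
  calc 2 * #P + #M = #(P ∪ (P ∪ M).image (insert x)) := by
        rw [card_union_of_disjoint hdisj, hcard_image]
        ring
    _ ≤ _ := card_le_card hsub

end Antichain

/-- If `𝓕` is an antichain of finite subsets of `ℕ`, then
`liminf_{n → ∞} |𝓕 ∩ 2^[n]| * (n ln n) / 2^n = 0`. -/
theorem infinite_antichain_upper
    (𝓕 : Set (Finset ℕ))
    (hanti : ∀ A ∈ 𝓕, ∀ B ∈ 𝓕, A ≠ B → ¬ A ⊆ B) :
    Filter.atTop.liminf
      (fun n : ℕ =>
        ({A : Finset ℕ | A ∈ 𝓕 ∧ A ⊆ Finset.Icc 1 n}.ncard : ℝ)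
          * ((n : ℝ) * Real.log n) / 2 ^ n) = 0 := by
  have hsummable : Summable fun n => (#(membersWithin 𝓕 (Icc 1 n)) : ℝ) / 2 ^ n := by
    refine summable_div_two_pow_of_two_mul_add_le
      (u := fun n => #(properSupersetsWithin 𝓕 (Icc 1 n))) (fun n => ?_) (fun n => ?_)
    · rw [← insert_Icc_right_eq_Icc_add_one (by omega)]
      exact two_mul_card_properSupersetsWithin_add_card_membersWithin_le hanti (by simp)
    · simpa using (card_membersWithin_add_card_properSupersetsWithin_le hanti (Icc 1 n)).trans'
        (Nat.le_add_left _ _)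
  simp_rw [ncard_setOf_mem_and_subset, mul_div_right_comm]
  exact liminf_mul_eq_zero_of_summable_of_not_summable_inv (fun n => by positivity) hsummable
    (fun n => mul_nonneg n.cast_nonneg (Real.log_natCast_nonneg n))
    Real.not_summable_inv_natCast_mul_log
end

section
/- Let $\mathcal{F}$ be an antichain of finite subsets of $\mathbb{N}$. Then $\sum_{n=1}^{\infty} \frac{|\mathcal{F} \cap 2^{[n]}|}{2^n} \leq 2$. -/
/-!
A set `A ∈ 𝓕` lies in `[n]` exactly when `0 ∉ A` and `n ≥ max A`, so exchanging the two sums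
bounds the left-hand side by `2 ∑_{A ∈ 𝓕, 0 ∉ A} 2^{-max A}`. That sum is at most `1`, a Kraft
inequality: inside `2^{[N]}` the cylinders `{S : S ∩ [max A] = A}`, of size `2^{N - max A}`, are
pairwise disjoint for distinct members of an antichain, because any two sets of the form
`S ∩ [m]` are comparable.
-/

open Finset
open scoped ENNReal

theorem ENNReal.tsum_geometric_inv_two_ge (m : ℕ) :
    ∑' k, (if m ≤ k then (2⁻¹ : ℝ≥0∞) ^ k else 0) = 2 * 2⁻¹ ^ m := by
  rw [← ENNReal.summable.sum_add_tsum_nat_add' (k := m),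
    sum_eq_zero fun i hi => if_neg (by simpa using hi), zero_add]
  simp only [le_add_self, if_true, pow_add, ENNReal.tsum_mul_right, ENNReal.tsum_geometric,
    ENNReal.one_sub_inv_two, inv_inv]

namespace Finset

theorem subset_Icc_one_iff {A : Finset ℕ} {n : ℕ} : A ⊆ Icc 1 n ↔ 0 ∉ A ∧ A.sup id ≤ n := by
  simp only [subset_iff, mem_Icc, Finset.sup_le_iff, id, Nat.one_le_iff_ne_zero]
  exact ⟨fun h => ⟨fun h0 => (h h0).1 rfl, fun a ha => (h ha).2⟩,
    fun h a ha => ⟨fun ha0 => h.1 (ha0 ▸ ha), h.2 a ha⟩⟩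

-- For `A ⊆ [N]`: the sets `S ⊆ [N]` with `S ∩ [max A] = A`.
def cylinder (N : ℕ) (A : Finset ℕ) : Finset (Finset ℕ) :=
  (Ioc (A.sup id) N).powerset.image (A ∪ ·)

theorem disjoint_Ioc_sup (A : Finset ℕ) (N : ℕ) : Disjoint A (Ioc (A.sup id) N) :=
  disjoint_left.2 fun _ ha ha' => (mem_Ioc.1 ha').1.not_ge (le_sup (f := id) ha)

theorem card_cylinder (N : ℕ) (A : Finset ℕ) : #(cylinder N A) = 2 ^ (N - A.sup id) := by
  rw [cylinder, card_image_of_injOn, card_powerset, Nat.card_Ioc]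
  intro X hX Y hY hXY
  have hX' := (disjoint_Ioc_sup A N).mono_right (mem_powerset.1 hX)
  have hY' := (disjoint_Ioc_sup A N).mono_right (mem_powerset.1 hY)
  rw [← union_sdiff_cancel_left hX', ← union_sdiff_cancel_left hY']
  exact congrArg (· \ A) hXY

theorem filter_le_sup_of_mem_cylinder {N : ℕ} {A S : Finset ℕ} (hS : S ∈ cylinder N A) :
    S.filter (· ≤ A.sup id) = A := by
  obtain ⟨X, hX, rfl⟩ := mem_image.1 hS
  rw [filter_union,
    filter_true_of_mem fun a (ha : a ∈ A) => show a ≤ A.sup id from le_sup (f := id) ha,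
    filter_false_of_mem fun a ha => (mem_Ioc.1 (mem_powerset.1 hX ha)).1.not_ge, union_empty]

theorem cylinder_subset_powerset {N : ℕ} {A : Finset ℕ} (hA : A ⊆ Icc 1 N) :
    cylinder N A ⊆ (Icc 1 N).powerset := by
  intro S hS
  obtain ⟨X, hX, rfl⟩ := mem_image.1 hS
  refine mem_powerset.2 (union_subset hA ((mem_powerset.1 hX).trans fun x hx => ?_))
  simp only [mem_Ioc, mem_Icc] at hx ⊢
  omega

theorem subset_of_mem_cylinder {N : ℕ} {A B S : Finset ℕ} (hA : S ∈ cylinder N A)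
    (hB : S ∈ cylinder N B) (h : A.sup id ≤ B.sup id) : A ⊆ B := by
  rw [← filter_le_sup_of_mem_cylinder hA, ← filter_le_sup_of_mem_cylinder hB]
  exact monotone_filter_right S fun _ _ ha => ha.trans h

theorem pairwiseDisjoint_cylinder {𝓕 : Set (Finset ℕ)} (h𝓕 : IsAntichain (· ⊆ ·) 𝓕) (N : ℕ) :
    𝓕.PairwiseDisjoint (cylinder N) := by
  intro A hA B hB hAB
  refine disjoint_left.2 fun S hSA hSB => ?_
  rcases le_total (A.sup id) (B.sup id) with h | h
  · exact h𝓕 hA hB hAB (subset_of_mem_cylinder hSA hSB h)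
  · exact h𝓕 hB hA hAB.symm (subset_of_mem_cylinder hSB hSA h)

theorem sum_two_pow_sub_sup_le {T : Finset (Finset ℕ)}
    (hT : IsAntichain (· ⊆ ·) (T : Set (Finset ℕ))) {N : ℕ} (hTN : ∀ A ∈ T, A ⊆ Icc 1 N) :
    ∑ A ∈ T, 2 ^ (N - A.sup id) ≤ 2 ^ N :=
  calc ∑ A ∈ T, 2 ^ (N - A.sup id) = #(T.biUnion (cylinder N)) := by
        rw [card_biUnion (pairwiseDisjoint_cylinder hT N)]
        exact sum_congr rfl fun A _ => (card_cylinder N A).symm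
    _ ≤ #(Icc 1 N).powerset :=
        card_le_card (biUnion_subset.2 fun A hA => cylinder_subset_powerset (hTN A hA))
    _ = 2 ^ N := by rw [card_powerset, Nat.card_Icc, Nat.add_sub_cancel]

theorem sum_inv_two_pow_sup_le_one {T : Finset (Finset ℕ)}
    (hT : IsAntichain (· ⊆ ·) (T : Set (Finset ℕ))) {N : ℕ} (hTN : ∀ A ∈ T, A ⊆ Icc 1 N) :
    ∑ A ∈ T, (2⁻¹ : ℝ≥0∞) ^ A.sup id ≤ 1 := by
  have h2 : (2 : ℝ≥0∞) * 2⁻¹ = 1 := ENNReal.mul_inv_cancel two_ne_zero ENNReal.ofNat_ne_top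
  have hterm : ∀ A ∈ T, (2⁻¹ : ℝ≥0∞) ^ A.sup id = 2 ^ (N - A.sup id) * 2⁻¹ ^ N := by
    intro A hA
    obtain ⟨k, hk⟩ := Nat.exists_eq_add_of_le (subset_Icc_one_iff.1 (hTN A hA)).2
    rw [hk, Nat.add_sub_cancel_left, pow_add, mul_left_comm, ← mul_pow, h2, one_pow, mul_one]
  calc ∑ A ∈ T, (2⁻¹ : ℝ≥0∞) ^ A.sup id
      = ((∑ A ∈ T, 2 ^ (N - A.sup id) : ℕ) : ℝ≥0∞) * 2⁻¹ ^ N := by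
        push_cast
        rw [sum_mul]
        exact sum_congr rfl hterm
    _ ≤ ((2 ^ N : ℕ) : ℝ≥0∞) * 2⁻¹ ^ N := by gcongr; exact sum_two_pow_sub_sup_le hT hTN
    _ = 1 := by rw [Nat.cast_pow, Nat.cast_ofNat, ← mul_pow, h2, one_pow]

end Finset

theorem tsum_inv_two_pow_sup_le_one {𝓕 : Set (Finset ℕ)} (h𝓕 : IsAntichain (· ⊆ ·) 𝓕)
    (h0 : ∀ A ∈ 𝓕, 0 ∉ A) : ∑' A : 𝓕, (2⁻¹ : ℝ≥0∞) ^ A.1.sup id ≤ 1 := by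
  rw [ENNReal.tsum_eq_iSup_sum]
  refine iSup_le fun T => ?_
  set S := T.map (Function.Embedding.subtype (· ∈ 𝓕))
  have hS𝓕 : ∀ A ∈ S, A ∈ 𝓕 := by
    intro A hA
    obtain ⟨A, -, rfl⟩ := mem_map.1 hA
    exact A.2
  have hSN : ∀ A ∈ S, A ⊆ Icc 1 (S.sup fun A : Finset ℕ => A.sup id) := fun A hA =>
    subset_Icc_one_iff.2 ⟨h0 A (hS𝓕 A hA), le_sup (f := fun A : Finset ℕ => A.sup id) hA⟩
  exact (sum_map T _ fun A : Finset ℕ => (2⁻¹ : ℝ≥0∞) ^ A.sup id).symm.trans_le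
    (sum_inv_two_pow_sup_le_one (h𝓕.subset hS𝓕) hSN)

theorem tsum_ite_subset_Icc_le (A : Finset ℕ) :
    ∑' n, (if A ⊆ Icc 1 (n + 1) then (2⁻¹ : ℝ≥0∞) ^ (n + 1) else 0) ≤
      if 0 ∉ A then 2 * 2⁻¹ ^ A.sup id else 0 := by
  simp_rw [subset_Icc_one_iff]
  by_cases h0 : 0 ∈ A
  · simp [h0]
  · simp only [h0, not_false_eq_true, true_and, if_true]
    exact (ENNReal.tsum_comp_le_tsum_of_injective (add_left_injective 1)
      fun k => if A.sup id ≤ k then (2⁻¹ : ℝ≥0∞) ^ k else 0).trans_eq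
      (ENNReal.tsum_geometric_inv_two_ge _)

theorem ncard_subset_Icc_div_eq_tsum (𝓕 : Set (Finset ℕ)) (n : ℕ) :
    ({A : Finset ℕ | A ∈ 𝓕 ∧ A ⊆ Icc 1 n}.ncard : ℝ≥0∞) / 2 ^ n =
      ∑' A, 𝓕.indicator (fun A => if A ⊆ Icc 1 n then (2⁻¹ : ℝ≥0∞) ^ n else 0) A := by
  have hfin : {A : Finset ℕ | A ∈ 𝓕 ∧ A ⊆ Icc 1 n}.Finite :=
    (Icc 1 n).powerset.finite_toSet.subset fun A hA => mem_powerset.2 hA.2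
  rw [div_eq_mul_inv, ENNReal.inv_pow, ← ENat.toENNReal_coe, hfin.cast_ncard_eq,
    ← ENNReal.tsum_set_const, _root_.tsum_subtype _ fun _ => _]
  congr 1
  ext A
  classical
  by_cases hA : A ∈ 𝓕 <;> simp [Set.indicator_apply, hA]

/-- If `𝓕` is an antichain of finite subsets of `ℕ`, then
`∑_{n=1}^∞ |𝓕 ∩ 2^[n]| / 2^n ≤ 2`. -/
theorem antichain_kraft_sum
    (𝓕 : Set (Finset ℕ))
    (hanti : ∀ A ∈ 𝓕, ∀ B ∈ 𝓕, A ≠ B → ¬ A ⊆ B) :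
    ∑' n : ℕ,
      (({A : Finset ℕ | A ∈ 𝓕 ∧ A ⊆ Finset.Icc 1 (n + 1)}.ncard : ENNReal)
        / 2 ^ (n + 1)) ≤ 2 := by
  have h𝓕 : IsAntichain (· ⊆ ·) 𝓕 := fun A hA B hB hAB => hanti A hA B hB hAB
  set 𝓕₀ := {A ∈ 𝓕 | 0 ∉ A}
  calc _ = ∑' n, ∑' A, 𝓕.indicator
          (fun A => if A ⊆ Icc 1 (n + 1) then (2⁻¹ : ℝ≥0∞) ^ (n + 1) else 0) A :=
        tsum_congr fun n => ncard_subset_Icc_div_eq_tsum 𝓕 (n + 1)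
    _ = ∑' A, ∑' n, 𝓕.indicator
          (fun A => if A ⊆ Icc 1 (n + 1) then (2⁻¹ : ℝ≥0∞) ^ (n + 1) else 0) A :=
        ENNReal.tsum_comm
    _ ≤ ∑' A, 𝓕₀.indicator (fun A => 2 * (2⁻¹ : ℝ≥0∞) ^ A.sup id) A := by
        refine ENNReal.tsum_le_tsum fun A => ?_
        classical
        by_cases hA : A ∈ 𝓕
        · simpa [Set.indicator_apply, hA, 𝓕₀] using tsum_ite_subset_Icc_le A
        · simp [hA, 𝓕₀]
    _ = 2 * ∑' A : 𝓕₀, (2⁻¹ : ℝ≥0∞) ^ A.1.sup id := by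
        rw [← ENNReal.tsum_mul_left]
        exact (_root_.tsum_subtype 𝓕₀ _).symm
    _ ≤ 2 * 1 := by
        gcongr
        exact tsum_inv_two_pow_sup_le_one (h𝓕.subset (Set.sep_subset _ _)) fun A hA => hA.2
    _ = 2 := mul_one 2
end

section
/- Let $X_1, X_2, \ldots$ be independent random variables on a probability space with $\mathbb{P}(X_i = 1) = \mathbb{P}(X_i = -1) = 1/2$ for each $i$, and let $S_n := X_1 + \cdots + X_n$. Then the probability that there exists some $n \geq 1$ with $S_n > 3\sqrt{n \ln \ln(n+3)} + 100$ is at most $1/2$. -/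
/-!
For `c ≥ 0` the process `exp (c Sₙ)` is a nonnegative submartingale, so Doob's maximal
inequality together with `𝔼 exp (c S_N) = cosh c ^ N ≤ exp (N c² / 2)` gives, for `c = a / N`,
`ℙ (max_{n ≤ N} Sₙ ≥ a) ≤ exp (-a² / 2N)`. The threshold `t(x) = 3 √(x ln ln (x + 3)) + 100` is
monotone, so a crossing at `n ∈ [2^j, 2^(j+1))` is a crossing of level `t(2^j)` before time
`2^(j+1)`, which has probability at most `exp (-t(2^j)² / 2^(j+2)) ≤ (ln (2^j + 3))⁻² ≤ (j ln 2)⁻²`.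
Since `Sₙ ≤ n < t(n)` for `n ≤ 100`, only the blocks `j ≥ 6` matter, and
`∑_{j ≥ 6} (j ln 2)⁻² ≤ 1 / (5 (ln 2)²) < 1 / 2`.
-/

open MeasureTheory ProbabilityTheory Real Finset

lemma exp_neg_mul_mul_cosh_pow_le (a : ℝ) {N : ℕ} (hN : 0 < N) :
    exp (-(a / N * a)) * cosh (a / N) ^ N ≤ exp (-(a ^ 2 / (2 * N))) := by
  have hN' : (0 : ℝ) < N := by exact_mod_cast hN
  calc exp (-(a / N * a)) * cosh (a / N) ^ N
      ≤ exp (-(a / N * a)) * exp ((a / N) ^ 2 / 2) ^ N := by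
        gcongr
        exact cosh_le_exp_half_sq _
    _ = exp (-(a ^ 2 / (2 * N))) := by
        rw [← exp_nat_mul, ← exp_add]
        congr 1
        field_simp
        ring

noncomputable def threshold (x : ℝ) : ℝ := 3 * √(x * log (log (x + 3))) + 100

lemma one_le_log_add_three {x : ℝ} (hx : 0 ≤ x) : 1 ≤ log (x + 3) := by
  rw [le_log_iff_exp_le (by positivity)]
  linarith [exp_one_lt_d9]

lemma hundred_le_threshold (x : ℝ) : 100 ≤ threshold x := by
  unfold threshold
  linarith [sqrt_nonneg (x * log (log (x + 3)))]

lemma threshold_mono {x y : ℝ} (hx : 0 ≤ x) (hxy : x ≤ y) : threshold x ≤ threshold y := by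
  have hlog := one_le_log_add_three hx
  unfold threshold
  gcongr
  exacts [log_nonneg hlog, hx.trans hxy]

lemma exp_neg_threshold_sq_le {x : ℝ} (hx : 0 < x) :
    exp (-(threshold x ^ 2 / (4 * x))) ≤ (log (x + 3) ^ 2)⁻¹ := by
  set L := log (x + 3)
  have hL : 1 ≤ L := one_le_log_add_three hx.le
  have hu : 0 ≤ log L := log_nonneg hL
  have hsq : 9 * (x * log L) ≤ threshold x ^ 2 := by
    have hs := sq_sqrt (mul_nonneg hx.le hu)
    have ht : threshold x = 3 * √(x * log L) + 100 := rfl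
    rw [ht]
    nlinarith [sqrt_nonneg (x * log L)]
  have hexp : exp (-(2 * log L)) = (L ^ 2)⁻¹ := by
    rw [exp_neg, ← Nat.cast_ofNat, ← log_pow, exp_log (by positivity)]
  rw [← hexp, exp_le_exp, neg_le_neg_iff, le_div_iff₀ (by positivity)]
  nlinarith

lemma sum_range_inv_sq_le (k M : ℕ) (hk : 0 < k) :
    ∑ j ∈ range M, (((j + k + 1 : ℕ) : ℝ) ^ 2)⁻¹ ≤ (k : ℝ)⁻¹ := by
  have htel : ∀ j : ℕ, (((j + k + 1 : ℕ) : ℝ) ^ 2)⁻¹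
      ≤ ((j + k : ℕ) : ℝ)⁻¹ - (((j + 1) + k : ℕ) : ℝ)⁻¹ := by
    intro j
    push_cast
    rw [inv_sub_inv (by positivity) (by positivity), le_div_iff₀ (by positivity),
      inv_mul_le_iff₀ (by positivity)]
    nlinarith
  calc ∑ j ∈ range M, (((j + k + 1 : ℕ) : ℝ) ^ 2)⁻¹
      ≤ ∑ j ∈ range M, (((j + k : ℕ) : ℝ)⁻¹ - (((j + 1) + k : ℕ) : ℝ)⁻¹) :=
        sum_le_sum fun j _ => htel j
    _ = (k : ℝ)⁻¹ - ((M + k : ℕ) : ℝ)⁻¹ := by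
        rw [sum_range_sub' (fun j => ((j + k : ℕ) : ℝ)⁻¹)]
        simp
    _ ≤ (k : ℝ)⁻¹ := by
        simp only [sub_le_self_iff, inv_nonneg, Nat.cast_nonneg]

lemma exists_dyadic_crossing {S : ℕ → ℝ} (hS : ∀ n, S n ≤ n) {n : ℕ} (hn : threshold n < S n) :
    ∃ j, 6 ≤ j ∧ ∃ m ≤ 2 ^ (j + 1), threshold (2 ^ j) ≤ S m := by
  have hn100 : 100 < n := by
    exact_mod_cast (hundred_le_threshold _).trans_lt (hn.trans_le (hS n))
  refine ⟨Nat.log 2 n, ?_, n, (Nat.lt_pow_succ_log_self one_lt_two n).le, ?_⟩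
  · by_contra! hj
    have := Nat.lt_pow_succ_log_self one_lt_two n
    have : 2 ^ (Nat.log 2 n + 1) ≤ 2 ^ 6 := Nat.pow_le_pow_right two_pos hj
    omega
  · refine (threshold_mono (by positivity) ?_).trans hn.le
    exact_mod_cast Nat.pow_log_le_self 2 (by omega)

lemma tsum_ofReal_inv_log_two_sq_le :
    ∑' k : ℕ, ENNReal.ofReal (((log 2) ^ 2)⁻¹ * (((k + 6 : ℕ) : ℝ) ^ 2)⁻¹) ≤ 1 / 2 := by
  refine ENNReal.tsum_le_of_sum_range_le fun M => ?_
  have hlog2 : 2 / 5 ≤ (log 2) ^ 2 := by nlinarith [log_two_gt_d9]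
  rw [← ENNReal.ofReal_sum_of_nonneg (fun _ _ => by positivity), ← mul_sum]
  calc ENNReal.ofReal (((log 2) ^ 2)⁻¹ * ∑ k ∈ range M, (((k + 6 : ℕ) : ℝ) ^ 2)⁻¹)
      ≤ ENNReal.ofReal ((2 / 5)⁻¹ * 5⁻¹) := by
        gcongr
        exact_mod_cast sum_range_inv_sq_le 5 M (by norm_num)
    _ = 1 / 2 := by
        rw [show ((2 / 5 : ℝ))⁻¹ * 5⁻¹ = 2⁻¹ by norm_num, ENNReal.ofReal_inv_of_pos two_pos,
          ENNReal.ofReal_ofNat, one_div]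

section Rademacher

variable {Ω : Type*} [MeasurableSpace Ω] {μ : Measure Ω} {Y : Ω → ℝ}

def IsRademacher (μ : Measure Ω) (Y : Ω → ℝ) : Prop :=
  μ {ω | Y ω = 1} = 1 / 2 ∧ μ {ω | Y ω = -1} = 1 / 2

namespace IsRademacher

variable [IsProbabilityMeasure μ]

lemma ae_eq_one_or_eq_neg_one (hY : Measurable Y) (h : IsRademacher μ Y) :
    ∀ᵐ ω ∂μ, Y ω = 1 ∨ Y ω = -1 := by
  have hdisj : Disjoint {ω | Y ω = 1} {ω | Y ω = -1} :=
    Set.disjoint_left.2 fun ω (h1 : Y ω = 1) (h2 : Y ω = -1) => by norm_num [h1] at h2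
  have hmeas : MeasurableSet {ω | Y ω = 1 ∨ Y ω = -1} := by
    rw [Set.ofPred_or]
    exact (hY (measurableSet_singleton 1)).union (hY (measurableSet_singleton (-1)))
  rw [ae_iff_measure_eq hmeas.nullMeasurableSet, Set.ofPred_or,
    measure_union hdisj (hY (measurableSet_singleton (-1))), h.1, h.2, ENNReal.add_halves,
    measure_univ]

lemma mgf_eq_cosh (hY : Measurable Y) (h : IsRademacher μ Y) (t : ℝ) : mgf Y μ t = cosh t := by
  have hpos : MeasurableSet {ω | Y ω = 1} := hY (measurableSet_singleton 1)
  have hneg : MeasurableSet {ω | Y ω = -1} := hY (measurableSet_singleton (-1))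
  have heq : (fun ω => exp (t * Y ω)) =ᵐ[μ]
      fun ω => {ω | Y ω = 1}.indicator (fun _ => exp t) ω
        + {ω | Y ω = -1}.indicator (fun _ => exp (-t)) ω := by
    filter_upwards [h.ae_eq_one_or_eq_neg_one hY] with ω hω
    rcases hω with hω | hω <;> norm_num [Set.indicator, hω]
  rw [mgf, integral_congr_ae heq, integral_add ((integrable_const _).indicator hpos)
    ((integrable_const _).indicator hneg), integral_indicator_const _ hpos,
    integral_indicator_const _ hneg, measureReal_def, measureReal_def, h.1, h.2, cosh_eq]
  norm_num
  ring

end IsRademacher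

end Rademacher

section RandomWalk

variable {Ω : Type*}

def partialSum (X : ℕ → Ω → ℝ) (n : ℕ) (ω : Ω) : ℝ := ∑ i ∈ range n, X (i + 1) ω

lemma partialSum_eq_sum (X : ℕ → Ω → ℝ) (n : ℕ) :
    partialSum X n = ∑ i ∈ range n, fun ω => X (i + 1) ω := by
  ext ω; simp [partialSum]

lemma partialSum_succ (X : ℕ → Ω → ℝ) (n : ℕ) (ω : Ω) :
    partialSum X (n + 1) ω = partialSum X n ω + X (n + 1) ω :=
  sum_range_succ _ _

lemma partialSum_le_of_le_one {X : ℕ → Ω → ℝ} {ω : Ω} (h : ∀ i, X i ω ≤ 1) (n : ℕ) :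
    partialSum X n ω ≤ n := by
  unfold partialSum
  simpa using sum_le_card_nsmul (range n) (fun i => X (i + 1) ω) 1 fun i _ => h (i + 1)

variable [MeasurableSpace Ω] {μ : Measure Ω} {X : ℕ → Ω → ℝ} {c : ℝ}

lemma mgf_partialSum (hX : ∀ i, Measurable (X i)) (hind : iIndepFun X μ) (n : ℕ) :
    mgf (partialSum X n) μ c = ∏ i ∈ range n, mgf (X (i + 1)) μ c := by
  rw [partialSum_eq_sum]
  exact (hind.precomp (add_left_injective 1)).mgf_sum (fun i => hX (i + 1)) _

lemma integrable_exp_mul_of_one_le_mgf {Y : Ω → ℝ} (h : 1 ≤ mgf Y μ c) :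
    Integrable (fun ω => exp (c * Y ω)) μ :=
  .of_integral_ne_zero (by rw [← mgf]; linarith)

lemma integrable_exp_mul_partialSum (hX : ∀ i, Measurable (X i))
    (hind : iIndepFun X μ) (hone : ∀ i, 1 ≤ mgf (X i) μ c) (n : ℕ) :
    Integrable (fun ω => exp (c * partialSum X n ω)) μ := by
  have := hind.isProbabilityMeasure
  rw [partialSum_eq_sum]
  exact (hind.precomp (add_left_injective 1)).integrable_exp_mul_sum (fun i => hX (i + 1))
    fun i _ => integrable_exp_mul_of_one_le_mgf (hone (i + 1))

theorem submartingale_exp_mul_partialSum (hX : ∀ i, Measurable (X i))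
    (hind : iIndepFun X μ) (hone : ∀ i, 1 ≤ mgf (X i) μ c) :
    Submartingale (fun n ω => exp (c * partialSum X n ω))
      (Filtration.natural X fun i => (hX i).stronglyMeasurable) μ := by
  have := hind.isProbabilityMeasure
  set 𝓕 := Filtration.natural X fun i => (hX i).stronglyMeasurable
  have hadapted : ∀ n, StronglyMeasurable[𝓕 n] fun ω => exp (c * partialSum X n ω) := by
    intro n
    refine (Measurable.exp (Measurable.const_mul ?_ c)).stronglyMeasurable
    exact Finset.measurable_sum _ fun i hi => ((Filtration.stronglyAdapted_natural _ (i + 1)).mono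
      (𝓕.mono (by simpa using hi))).measurable
  refine submartingale_nat hadapted (integrable_exp_mul_partialSum hX hind hone) fun n => ?_
  have hsplit : (fun ω => exp (c * partialSum X (n + 1) ω))
      = (fun ω => exp (c * partialSum X n ω)) * fun ω => exp (c * X (n + 1) ω) := by
    ext ω; simp [partialSum_succ, mul_add, exp_add]
  have hindep_next :
      μ[fun ω => exp (c * X (n + 1) ω) | 𝓕 n] =ᵐ[μ] fun _ => mgf (X (n + 1)) μ c :=
    condExp_indep_eq (hX (n + 1)).comap_le (𝓕.le n)
      ((comap_measurable (X (n + 1))).const_mul c).exp.stronglyMeasurable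
      (hind.indep_comap_natural_of_lt _ n.lt_succ_self)
  have hpull := condExp_mul_of_stronglyMeasurable_left (m := 𝓕 n) (μ := μ) (hadapted n)
    (by rw [← hsplit]; exact integrable_exp_mul_partialSum hX hind hone (n + 1))
    (integrable_exp_mul_of_one_le_mgf (hone (n + 1)))
  filter_upwards [hpull, hindep_next] with ω hω hω'
  rw [hsplit, hω, Pi.mul_apply, hω']
  exact le_mul_of_one_le_right (exp_pos _).le (hone (n + 1))

theorem measure_exists_le_partialSum_le (hX : ∀ i, Measurable (X i))
    (hind : iIndepFun X μ) (hc : 0 ≤ c) (hone : ∀ i, 1 ≤ mgf (X i) μ c) (a : ℝ) (N : ℕ) :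
    μ {ω | ∃ n ≤ N, a ≤ partialSum X n ω}
      ≤ ENNReal.ofReal (exp (-(c * a)) * mgf (partialSum X N) μ c) := by
  have := hind.isProbabilityMeasure
  set Z : ℕ → Ω → ℝ := fun n ω => exp (c * partialSum X n ω)
  set ε : NNReal := ⟨exp (c * a), (exp_pos _).le⟩
  set M := {ω | (ε : ℝ) ≤ (range (N + 1)).sup' nonempty_range_add_one fun k => Z k ω}
  have hdoob := maximal_ineq (submartingale_exp_mul_partialSum hX hind hone)
    (fun n ω => (exp_pos _).le) (ε := ε) N
  have hsub : {ω | ∃ n ≤ N, a ≤ partialSum X n ω} ⊆ M := by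
    rintro ω ⟨n, hnN, hn⟩
    exact (exp_le_exp.2 (mul_le_mul_of_nonneg_left hn hc)).trans
      (le_sup' (fun k => Z k ω) (mem_range.2 (Nat.lt_succ_of_le hnN)))
  have hint : ∫ ω in M, Z N ω ∂μ ≤ mgf (partialSum X N) μ c :=
    setIntegral_le_integral (integrable_exp_mul_partialSum hX hind hone N)
      (ae_of_all _ fun ω => (exp_pos _).le)
  have hM : exp (c * a) * μ.real M ≤ mgf (partialSum X N) μ c := by
    have := ENNReal.toReal_le_of_le_ofReal mgf_nonneg (hdoob.trans (ENNReal.ofReal_le_ofReal hint))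
    rwa [ENNReal.toReal_mul, ENNReal.coe_toReal] at this
  rw [ENNReal.le_ofReal_iff_toReal_le (measure_ne_top _ _) (mul_nonneg (exp_pos _).le mgf_nonneg),
    ← measureReal_def,
    exp_neg, inv_mul_eq_div, le_div_iff₀' (exp_pos _)]
  exact (mul_le_mul_of_nonneg_left (measureReal_mono hsub) (exp_pos _).le).trans hM

theorem measure_exists_le_partialSum_le_of_isRademacher (hX : ∀ i, Measurable (X i))
    (hind : iIndepFun X μ) (hrad : ∀ i, IsRademacher μ (X i)) {a : ℝ} (ha : 0 ≤ a) {N : ℕ}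
    (hN : 0 < N) :
    μ {ω | ∃ n ≤ N, a ≤ partialSum X n ω} ≤ ENNReal.ofReal (exp (-(a ^ 2 / (2 * N)))) := by
  have := hind.isProbabilityMeasure
  have hmgf : ∀ i t, mgf (X i) μ t = cosh t := fun i => (hrad i).mgf_eq_cosh (hX i)
  calc μ {ω | ∃ n ≤ N, a ≤ partialSum X n ω}
      ≤ ENNReal.ofReal (exp (-(a / N * a)) * mgf (partialSum X N) μ (a / N)) :=
        measure_exists_le_partialSum_le hX hind (by positivity)
          (fun i => (hmgf i _).symm ▸ one_le_cosh _) a N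
    _ = ENNReal.ofReal (exp (-(a / N * a)) * cosh (a / N) ^ N) := by
        simp only [mgf_partialSum hX hind, hmgf, prod_const, card_range]
    _ ≤ ENNReal.ofReal (exp (-(a ^ 2 / (2 * N)))) :=
        ENNReal.ofReal_le_ofReal (exp_neg_mul_mul_cosh_pow_le a hN)

theorem measure_exists_threshold_le_partialSum_le (hX : ∀ i, Measurable (X i))
    (hind : iIndepFun X μ) (hrad : ∀ i, IsRademacher μ (X i)) {j : ℕ} (hj : 0 < j) :
    μ {ω | ∃ n ≤ 2 ^ (j + 1), threshold (2 ^ j) ≤ partialSum X n ω}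
      ≤ ENNReal.ofReal (((log 2) ^ 2)⁻¹ * ((j : ℝ) ^ 2)⁻¹) := by
  refine (measure_exists_le_partialSum_le_of_isRademacher hX hind hrad
    ((by norm_num : (0 : ℝ) ≤ 100).trans (hundred_le_threshold _)) (by positivity)).trans
    (ENNReal.ofReal_le_ofReal ?_)
  have hN : 2 * ((2 ^ (j + 1) : ℕ) : ℝ) = 4 * 2 ^ j := by push_cast; ring
  have hjlog : 0 < j * log 2 := mul_pos (by exact_mod_cast hj) (log_pos one_lt_two)
  calc exp (-(threshold (2 ^ j) ^ 2 / (2 * ((2 ^ (j + 1) : ℕ) : ℝ))))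
      ≤ (log (2 ^ j + 3) ^ 2)⁻¹ := hN ▸ exp_neg_threshold_sq_le (by positivity)
    _ ≤ ((j * log 2) ^ 2)⁻¹ := by
        gcongr
        rw [← log_pow]
        exact log_le_log (by positivity) (by linarith)
    _ = ((log 2) ^ 2)⁻¹ * ((j : ℝ) ^ 2)⁻¹ := by rw [mul_pow, mul_inv, mul_comm]

end RandomWalk

/-- Law of the iterated logarithm type bound: for an i.i.d. sequence of uniform `±1`
random variables with partial sums `Sₙ`, the probability that `Sₙ > 3√(n ln ln (n+3)) + 100`
for some `n ≥ 1` is at most `1/2`. -/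
theorem random_walk_crossing_prob
    {Ω : Type*} [MeasureSpace Ω] [IsProbabilityMeasure (ℙ : Measure Ω)]
    (X : ℕ → Ω → ℝ)
    (hmeas : ∀ i, Measurable (X i))
    (hindep : iIndepFun X ℙ)
    (hdist : ∀ i, ℙ {ω | X i ω = 1} = 1 / 2 ∧ ℙ {ω | X i ω = -1} = 1 / 2) :
    ℙ {ω | ∃ n : ℕ, 1 ≤ n ∧
        3 * Real.sqrt (n * Real.log (Real.log (n + 3))) + 100
          < ∑ i ∈ Finset.range n, X (i + 1) ω} ≤ 1 / 2 := by
  have hrad : ∀ i, IsRademacher ℙ (X i) := hdist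
  have hle_one : ∀ᵐ ω ∂ℙ, ∀ i, X i ω ≤ 1 := ae_all_iff.2 fun i => by
    filter_upwards [(hrad i).ae_eq_one_or_eq_neg_one (hmeas i)] with ω hω
    rcases hω with h | h <;> norm_num [h]
  calc ℙ {ω | ∃ n : ℕ, 1 ≤ n ∧ threshold n < partialSum X n ω}
      ≤ ℙ (⋃ k : ℕ, {ω | ∃ n ≤ 2 ^ (k + 6 + 1), threshold (2 ^ (k + 6)) ≤ partialSum X n ω}) := by
        refine measure_mono_ae ?_
        filter_upwards [hle_one] with ω hω hE
        obtain ⟨n, -, hn⟩ := hE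
        obtain ⟨j, hj, hcross⟩ := exists_dyadic_crossing (partialSum_le_of_le_one hω) hn
        exact Set.mem_iUnion.2 ⟨j - 6, by rwa [Nat.sub_add_cancel hj]⟩
    _ ≤ ∑' k : ℕ, ℙ {ω | ∃ n ≤ 2 ^ (k + 6 + 1), threshold (2 ^ (k + 6)) ≤ partialSum X n ω} :=
        measure_iUnion_le _
    _ ≤ ∑' k : ℕ, ENNReal.ofReal (((log 2) ^ 2)⁻¹ * (((k + 6 : ℕ) : ℝ) ^ 2)⁻¹) :=
        ENNReal.tsum_le_tsum fun k =>
          measure_exists_threshold_le_partialSum_le hmeas hindep hrad (by omega)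
    _ ≤ 1 / 2 := tsum_ofReal_inv_log_two_sq_le
end

section
/- Let $n = p + q$ and let $x_1, x_2, \ldots, x_n$ be a sequence with values in $\{-1, +1\}$ such that exactly $p$ of the entries equal $+1$ and exactly $q \neq 0$ of the entries equal $-1$. Let $\mu \in \mathbb{R}$ satisfy $0 < \mu \leq \frac{p - q}{p + q}$. Call an index $r \in \{1, \dots, n\}$ a head if $\sum_{i=0}^{j-1} x_{((r + i - 1) \bmod n) + 1} > \mu j$ for all $j \in \{1, \dots, n\}$ (i.e., all partial sums of the cyclic rotation of the sequence starting at position $r$ exceed $\mu$ times their length). Then the number of heads is at least $p - \lfloor \frac{1+\mu}{1-\mu} q \rfloor$. -/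
/-!
Put `h t = ∑_{i<t} (x_{i mod n} - μ)`. An index `r` is a head exactly when `h r < h u` for
every `u > r`; moreover `h (t + n) = h t + σ` with `σ = (p - q) - μ n = (1 - μ) (p - c q)`,
`c = (1 + μ) / (1 - μ)`, and `h` rises by at most `1 - μ` per step. Starting from one such
strict future minimum `r`, jump repeatedly to the last minimiser of `h` beyond the current
point: each jump lands on another strict future minimum and raises `h` by at most `1 - μ`.
Strict future minima within one period are distinct heads modulo `n`, so with `k` heads the
chain passes `r + n` after `k` jumps, giving `σ ≤ k (1 - μ)`, i.e. `k ≥ p - c q`.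
-/

open Finset

def IsStrictFutureMin (h : ℕ → ℝ) (t : ℕ) : Prop :=
  ∀ u, t < u → h t < h u

section Drift

variable {h : ℕ → ℝ} {n : ℕ} {σ δ : ℝ}

theorem apply_add_mul_eq_of_drift (hper : ∀ t, h (t + n) = h t + σ) (t k : ℕ) :
    h (t + k * n) = h t + k * σ := by
  induction k with
  | zero => simp
  | succ k ih => rw [Nat.succ_mul, ← add_assoc, hper, ih]; push_cast; ring

theorem exists_forall_ge_lt_of_drift (hn : 0 < n) (hσ : 0 < σ)
    (hper : ∀ t, h (t + n) = h t + σ) (c : ℝ) : ∃ N, ∀ u, N ≤ u → c < h u := by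
  obtain ⟨B, hB⟩ : ∃ B, ∀ t < n, B ≤ h t :=
    ⟨(range n).inf' ⟨0, mem_range.2 hn⟩ h, fun t ht => inf'_le h (mem_range.2 ht)⟩
  obtain ⟨K, hK⟩ := exists_nat_gt ((c - B) / σ)
  refine ⟨K * n, fun u hu => ?_⟩
  have hKu : (K : ℝ) ≤ (u / n : ℕ) := by exact_mod_cast (Nat.le_div_iff_mul_le hn).2 hu
  have hu_eq := apply_add_mul_eq_of_drift hper (u % n) (u / n)
  rw [Nat.mod_add_div'] at hu_eq
  rw [div_lt_iff₀ hσ] at hK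
  nlinarith [hB (u % n) (Nat.mod_lt u hn)]

theorem exists_isStrictFutureMin_le (hn : 0 < n) (hσ : 0 < σ)
    (hper : ∀ t, h (t + n) = h t + σ) (t : ℕ) :
    ∃ s, t ≤ s ∧ IsStrictFutureMin h s ∧ h s ≤ h t := by
  classical
  obtain ⟨N, hN⟩ := exists_forall_ge_lt_of_drift hn hσ hper (h t)
  have htN : t ≤ N := by
    by_contra! hNt
    exact lt_irrefl _ (hN t hNt.le)
  set s := Nat.findGreatest (fun u => t ≤ u ∧ h u ≤ h t) N
  have hs : t ≤ s ∧ h s ≤ h t :=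
    Nat.findGreatest_spec (P := fun u => t ≤ u ∧ h u ≤ h t) htN ⟨le_rfl, le_rfl⟩
  refine ⟨s, hs.1, fun u hsu => ?_, hs.2⟩
  by_contra! hus
  have hut : h u ≤ h t := hus.trans hs.2
  have huN : u ≤ N := by
    by_contra! hNu
    exact (hN u hNu.le).not_ge hut
  exact Nat.findGreatest_is_greatest hsu huN ⟨hs.1.trans hsu.le, hut⟩

theorem isStrictFutureMin_add_period_iff (hper : ∀ t, h (t + n) = h t + σ) {t : ℕ} :
    IsStrictFutureMin h (t + n) ↔ IsStrictFutureMin h t := by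
  refine ⟨fun ht u hu => ?_, fun ht u hu => ?_⟩
  · have := ht (u + n) (by omega)
    rw [hper, hper] at this
    linarith
  · have hu_eq := hper (u - n)
    rw [Nat.sub_add_cancel (by omega)] at hu_eq
    rw [hper, hu_eq]
    linarith [ht (u - n) (by omega)]

theorem IsStrictFutureMin.mod (hper : ∀ t, h (t + n) = h t + σ) {t : ℕ}
    (ht : IsStrictFutureMin h t) : IsStrictFutureMin h (t % n) := by
  have hmul (k : ℕ) : IsStrictFutureMin h (t % n + k * n) → IsStrictFutureMin h (t % n) := by
    induction k with
    | zero => simp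
    | succ k ih => rw [Nat.succ_mul, ← add_assoc, isStrictFutureMin_add_period_iff hper]; exact ih
  exact hmul (t / n) (by rwa [Nat.mod_add_div'])

theorem isStrictFutureMin_iff_forall_le_period (hn : 0 < n) (hσ : 0 ≤ σ)
    (hper : ∀ t, h (t + n) = h t + σ) {r : ℕ} :
    IsStrictFutureMin h r ↔ ∀ j, 1 ≤ j → j ≤ n → h r < h (r + j) := by
  refine ⟨fun hr j hj _ => hr _ (by omega), fun hr u => ?_⟩
  induction u using Nat.strong_induction_on with
  | _ u ih =>
    intro hru
    rcases le_or_gt u (r + n) with hu | hu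
    · simpa [Nat.add_sub_cancel' hru.le] using hr (u - r) (by omega) (by omega)
    · have hu_eq := hper (u - n)
      rw [Nat.sub_add_cancel (by omega)] at hu_eq
      linarith [ih (u - n) (by omega) (by omega)]

theorem card_le_ncard_of_subset_Ico {A : ℕ → Prop} (hA : ∀ t, A t → A (t % n)) {r : ℕ}
    {s : Finset ℕ} (hs : ∀ t ∈ s, t ∈ Ico r (r + n) ∧ A t) :
    s.card ≤ {t | t < n ∧ A t}.ncard := by
  rw [← Set.ncard_coe_finset]
  refine Set.ncard_le_ncard_of_injOn (· % n) (fun t ht => ?_)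
    ((Nat.mod_injOn_Ico r n).mono fun t ht => (hs t ht).1)
    ((Set.finite_lt_nat n).subset fun t ht => ht.1)
  obtain ⟨ht_mem, hAt⟩ := hs t ht
  rw [mem_Ico] at ht_mem
  exact ⟨Nat.mod_lt _ (by omega), hA t hAt⟩

theorem drift_le_ncard_isStrictFutureMin_mul (hn : 0 < n) (hσ : 0 < σ)
    (hper : ∀ t, h (t + n) = h t + σ) (hstep : ∀ t, h (t + 1) ≤ h t + δ) :
    σ ≤ {t | t < n ∧ IsStrictFutureMin h t}.ncard * δ := by
  set k := {t | t < n ∧ IsStrictFutureMin h t}.ncard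
  obtain ⟨s₀, -, hs₀, -⟩ := exists_isStrictFutureMin_le hn hσ hper 0
  set r := s₀ % n
  have hr : IsStrictFutureMin h r := hs₀.mod hper
  choose next hnext_gt hnext_min hnext_le using
    fun t => exists_isStrictFutureMin_le hn hσ hper (t + 1)
  set m : ℕ → ℕ := fun i => next^[i] r
  have hm_succ (i : ℕ) : m (i + 1) = next (m i) := Function.iterate_succ_apply' next i r
  have hm_min (i : ℕ) : IsStrictFutureMin h (m i) := by
    cases i with
    | zero => exact hr
    | succ i => rw [hm_succ]; exact hnext_min _
  have hm_mono : StrictMono m :=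
    strictMono_nat_of_lt_succ fun i => by rw [hm_succ]; exact hnext_gt _
  have hm_le (i : ℕ) : h (m i) ≤ h r + i * δ := by
    induction i with
    | zero => simp [m]
    | succ i ih => rw [hm_succ]; push_cast; linarith [hnext_le (m i), hstep (m i)]
  have hmk : r + n ≤ m k := by
    by_contra! hlt
    have := card_le_ncard_of_subset_Ico (A := IsStrictFutureMin h) (fun t ht => ht.mod hper) (r := r)
      (s := (range (k + 1)).image m) fun t ht => by
        obtain ⟨i, hi, rfl⟩ := mem_image.1 ht
        exact ⟨mem_Ico.2 ⟨hm_mono.monotone (Nat.zero_le i),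
          (hm_mono.monotone (Nat.lt_succ_iff.1 (mem_range.1 hi))).trans_lt hlt⟩, hm_min i⟩
    rw [card_image_of_injective _ hm_mono.injective, card_range] at this
    omega
  have hrn : h (r + n) ≤ h (m k) := by
    rcases hmk.eq_or_lt with heq | hlt
    · rw [heq]
    · exact ((isStrictFutureMin_add_period_iff hper).2 hr _ hlt).le
  linarith [hper r, hm_le k]

end Drift

theorem Function.Periodic.sum_range_add_period {M : Type*} [AddCommMonoid M] {y : ℕ → M}
    {n : ℕ} (hy : Function.Periodic y n) (t : ℕ) :
    ∑ i ∈ range (t + n), y i = ∑ i ∈ range t, y i + ∑ i ∈ range n, y i := by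
  rw [add_comm t n, sum_range_add, add_comm]
  congr 1
  exact sum_congr rfl fun i _ => by rw [add_comm]; exact hy i

theorem sum_range_eq_ncard_sub_ncard {n : ℕ} {x : ℕ → ℤ} (hx : ∀ i < n, x i = 1 ∨ x i = -1) :
    ∑ i ∈ range n, x i = ({i | i < n ∧ x i = 1}.ncard : ℤ) - {i | i < n ∧ x i = -1}.ncard := by
  classical
  have hset (P : ℕ → Prop) [DecidablePred P] : {i | i < n ∧ P i} = ↑((range n).filter P) := by
    ext; simp
  rw [hset, hset, Set.ncard_coe_finset, Set.ncard_coe_finset, natCast_card_filter,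
    natCast_card_filter, ← sum_sub_distrib]
  refine sum_congr rfl fun i hi => ?_
  rcases hx i (mem_range.1 hi) with hxi | hxi <;> simp [hxi]

section TiltedWalk

variable {n : ℕ} {x : ℕ → ℤ} {μ : ℝ}

def tiltedWalk (x : ℕ → ℤ) (n : ℕ) (μ : ℝ) (t : ℕ) : ℝ :=
  ∑ i ∈ range t, ((x (i % n) : ℝ) - μ)

theorem tiltedWalk_add_sub (r j : ℕ) :
    tiltedWalk x n μ (r + j) - tiltedWalk x n μ r =
      ((∑ i ∈ range j, x ((r + i) % n) : ℤ) : ℝ) - μ * j := by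
  simp only [tiltedWalk, sum_range_add, sum_sub_distrib, sum_const, card_range, nsmul_eq_mul]
  push_cast
  ring

theorem tiltedWalk_add_period (t : ℕ) :
    tiltedWalk x n μ (t + n) = tiltedWalk x n μ t + (((∑ i ∈ range n, x i : ℤ) : ℝ) - μ * n) := by
  have hy : Function.Periodic (fun i => (x (i % n) : ℝ) - μ) n := fun i => by simp
  rw [tiltedWalk, hy.sum_range_add_period, ← tiltedWalk, sum_sub_distrib,
    sum_congr rfl fun i hi => by rw [Nat.mod_eq_of_lt (mem_range.1 hi)]]
  simp [mul_comm]

theorem tiltedWalk_succ_le (hn : 0 < n) (hx : ∀ i < n, x i ≤ 1) (t : ℕ) :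
    tiltedWalk x n μ (t + 1) ≤ tiltedWalk x n μ t + (1 - μ) := by
  have : (x (t % n) : ℝ) ≤ 1 := by exact_mod_cast hx _ (Nat.mod_lt t hn)
  simp only [tiltedWalk, sum_range_succ]
  linarith

theorem setOf_head_eq (hn : 0 < n) (hσ : 0 ≤ ((∑ i ∈ range n, x i : ℤ) : ℝ) - μ * n) :
    {r | r < n ∧ ∀ j, 1 ≤ j → j ≤ n →
        μ * j < ((∑ i ∈ range j, x ((r + i) % n) : ℤ) : ℝ)} =
      {t | t < n ∧ IsStrictFutureMin (tiltedWalk x n μ) t} := by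
  ext r
  simp only [Set.mem_ofPred_eq,
    isStrictFutureMin_iff_forall_le_period hn hσ tiltedWalk_add_period]
  refine and_congr_right fun _ => forall₃_congr fun j _ _ => ?_
  rw [← sub_pos, ← tiltedWalk_add_sub, sub_pos]

end TiltedWalk

theorem cycle_lemma_general
    (p q n : ℕ) (hn : n = p + q) (hq : q ≠ 0)
    (x : ℕ → ℤ)
    (hx : ∀ i < n, x i = 1 ∨ x i = -1)
    (hp : ({i | i < n ∧ x i = 1}).ncard = p)
    (hqcount : ({i | i < n ∧ x i = -1}).ncard = q)
    (μ : ℝ) (hμ1 : μ ≤ ((p : ℝ) - q) / ((p : ℝ) + q)) :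
    (p : ℤ) - ⌊(1 + μ) / (1 - μ) * q⌋ ≤
      (({r | r < n ∧ ∀ j, 1 ≤ j → j ≤ n →
          μ * j < ((∑ i ∈ Finset.range j, x ((r + i) % n) : ℤ) : ℝ)}).ncard : ℤ) := by
  have hn0 : 0 < n := by omega
  have hq1 : (1 : ℝ) ≤ q := by exact_mod_cast Nat.one_le_iff_ne_zero.2 hq
  have hμ : μ < 1 := hμ1.trans_lt <| (div_lt_one (by positivity)).2 (by linarith)
  set c := (1 + μ) / (1 - μ)
  rcases le_or_gt (p : ℝ) (c * q) with hle | hlt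
  · have : (p : ℤ) ≤ ⌊c * q⌋ := Int.le_floor.2 (by exact_mod_cast hle)
    omega
  have hσ : ((∑ i ∈ range n, x i : ℤ) : ℝ) - μ * n = (1 - μ) * (p - c * q) := by
    have : 1 - μ ≠ 0 := by linarith
    rw [sum_range_eq_ncard_sub_ncard hx, hp, hqcount, hn]
    simp only [c]
    push_cast
    field_simp
    ring
  have hσ_pos : 0 < (1 - μ) * (p - c * q) := mul_pos (by linarith) (by linarith)
  rw [setOf_head_eq hn0 (hσ ▸ hσ_pos.le)]
  have hdrift := drift_le_ncard_isStrictFutureMin_mul hn0 hσ_pos (hσ ▸ tiltedWalk_add_period)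
    (tiltedWalk_succ_le hn0 fun i hi => by rcases hx i hi with h | h <;> simp [h])
  have : (p : ℤ) - {t | t < n ∧ IsStrictFutureMin (tiltedWalk x n μ) t}.ncard ≤ ⌊c * q⌋ :=
    Int.le_floor.2 (by push_cast; nlinarith)
  omega

/-- Cycle lemma: given a circular sequence of `p` many `+1`'s and `q ≠ 0` many `-1`'s
(`n = p + q`) and `0 < μ ≤ (p-q)/(p+q)`, the number of indices `r` such that every
partial sum of the cyclic rotation starting at `r` exceeds `μ` times its length is at
least `p - ⌊(1+μ)/(1-μ) · q⌋`. -/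
theorem cycle_lemma
    (p q n : ℕ) (hn : n = p + q) (hq : q ≠ 0)
    (x : ℕ → ℤ)
    (hx : ∀ i < n, x i = 1 ∨ x i = -1)
    (hp : ({i | i < n ∧ x i = 1}).ncard = p)
    (hqcount : ({i | i < n ∧ x i = -1}).ncard = q)
    (μ : ℝ) (hμ0 : 0 < μ) (hμ1 : μ ≤ ((p : ℝ) - q) / ((p : ℝ) + q)) :
    (p : ℤ) - ⌊(1 + μ) / (1 - μ) * q⌋ ≤
      (({r | r < n ∧ ∀ j, 1 ≤ j → j ≤ n →
          μ * j < ((∑ i ∈ Finset.range j, x ((r + i) % n) : ℤ) : ℝ)}).ncard : ℤ) :=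
  cycle_lemma_general p q n hn hq x hx hp hqcount μ hμ1
end

section
/- Let $f : \mathbb{N} \to \mathbb{N}$ be a monotone non-decreasing function. For each positive integer $n$, define $\mathcal{F}_n := \{A \subseteq [2n] : |A| = n + f(n) \text{ and for all } i \text{ with } 0 < i < n,\ |A \cap [2i]| < i + f(i)\}$. Then $\mathcal{F} := \bigcup_{n=1}^{\infty} \mathcal{F}_n$ is an antichain: for all distinct $A, B \in \mathcal{F}$, $A \not\subseteq B$. -/
/-!
If `A ∈ 𝓕ₘ` and `B ∈ 𝓕ₙ` with `A ⊆ B`, then `m + f m = |A| ≤ |B| = n + f n` forces `m ≤ n`,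
since `n ↦ n + f n` is strictly increasing. If `m < n`, then `A ⊆ B ∩ [2m]` gives
`|B ∩ [2m]| ≥ m + f m`, which the defining condition of `𝓕ₙ` at `i = m` forbids.
So `m = n`, and then `A ⊆ B` with `|A| = |B|` gives `A = B`.
-/

open Finset

/-- The sets `A ⊆ [2n]` whose prefix counts `|A ∩ [2i]|` reach the threshold `i + f i`
for the first time at `i = n`. -/
def firstCrossing (f : ℕ → ℕ) (n : ℕ) : Set (Finset ℕ) :=
  {A | A ⊆ Icc 1 (2 * n) ∧ #A = n + f n ∧
    ∀ i, 0 < i → i < n → #(A ∩ Icc 1 (2 * i)) < i + f i}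

section

variable {f : ℕ → ℕ} {m n : ℕ} {A B : Finset ℕ}

theorem le_of_subset_of_card_eq_add (hf : Monotone f) (hA : #A = m + f m) (hB : #B = n + f n)
    (hAB : A ⊆ B) : m ≤ n :=
  (strictMono_id.add_monotone hf).le_iff_le.mp (hA ▸ hB ▸ card_le_card hAB)

theorem not_lt_of_subset_of_mem_firstCrossing (hm : 0 < m) (hA : A ∈ firstCrossing f m)
    (hB : B ∈ firstCrossing f n) (hAB : A ⊆ B) : ¬ m < n := by
  intro hmn
  have hB_lt : #(B ∩ Icc 1 (2 * m)) < #A := hA.2.1 ▸ hB.2.2 m hm hmn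
  exact hB_lt.not_ge (card_le_card (subset_inter hAB hA.1))

theorem eq_of_subset_of_mem_firstCrossing (hf : Monotone f) (hm : 0 < m)
    (hA : A ∈ firstCrossing f m) (hB : B ∈ firstCrossing f n) (hAB : A ⊆ B) : A = B := by
  obtain rfl : m = n := le_antisymm (le_of_subset_of_card_eq_add hf hA.2.1 hB.2.1 hAB)
    (not_lt.mp (not_lt_of_subset_of_mem_firstCrossing hm hA hB hAB))
  exact eq_of_subset_of_card_le hAB (hA.2.1 ▸ hB.2.1 ▸ le_rfl)

end

/-- For a monotone non-decreasing `f : ℕ → ℕ`, the union over `n ≥ 1` of the families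
`𝓕ₙ = {A ⊆ [2n] : |A| = n + f(n), ∀ 0 < i < n, |A ∩ [2i]| < i + f(i)}` is an antichain. -/
theorem monotone_f_antichain
    (f : ℕ → ℕ) (hf : Monotone f)
    (𝓕 : ℕ → Set (Finset ℕ))
    (h𝓕 : ∀ n, 𝓕 n = {A : Finset ℕ | A ⊆ Finset.Icc 1 (2 * n) ∧
        A.card = n + f n ∧
        ∀ i, 0 < i → i < n → (A ∩ Finset.Icc 1 (2 * i)).card < i + f i}) :
    ∀ A ∈ ⋃ n ∈ Set.Ici 1, 𝓕 n, ∀ B ∈ ⋃ n ∈ Set.Ici 1, 𝓕 n,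
      A ≠ B → ¬ A ⊆ B := by
  obtain rfl : 𝓕 = firstCrossing f := funext h𝓕
  simp only [Set.mem_iUnion, Set.mem_Ici]
  rintro A ⟨m, hm, hA⟩ B ⟨n, -, hB⟩ hne hAB
  exact hne (eq_of_subset_of_mem_firstCrossing hf hm hA hB hAB)
end

section
/- Define $\mathcal{F}_n := \{A \subseteq [2n] : |A| = n \text{ and for all } i \text{ with } 0 < i < n,\ |A \cap [2i]| < i\}$ and $\mathcal{F} := \bigcup_{n=1}^{\infty} \mathcal{F}_n$. Then there exist constants $c, C > 0$ such that for all sufficiently large $n$, $c \cdot \frac{2^n}{n^{3/2}} \leq |\mathcal{F} \cap 2^{[n]}| \leq C \cdot \frac{2^n}{n^{3/2}}$, where $\mathcal{F} \cap 2^{[n]}$ is the set of members of $\mathcal{F}$ contained in $[n]$. -/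
/-!
Encode `A ⊆ [N]` as the word of length `N` whose `j`-th letter is a down-step iff `j ∈ A`. For
`m ≥ 2`, `A ∈ 𝓕_m` exactly when this word is a Dyck word of semilength `m` that touches the axis
only at its ends; removing the first and last letters then gives `|𝓕_m| = Cat(m - 1)`, while
`𝓕_1 = {{1}, {2}}`. Every member of `𝓕_m` with `m ≥ 2` contains `2m`, hence
`|𝓕 ∩ 2^[n]| = 1 + ∑_{k < ⌊n/2⌋} Cat k`, which lies between `Cat j` and `3 Cat j` for
`j = ⌊n/2⌋ - 1` because the Catalan numbers at least double from index 1 on. Finally the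
Wallis-type bounds `Cat(k)² (k+1)³ ≤ 16^k ≤ (4k+1)(k+1)² Cat(k)²`, proved by induction from
`(k+2) Cat(k+1) = 2(2k+1) Cat(k)`, give `Cat j ≍ 4^j / j^{3/2} ≍ 2^n / n^{3/2}`.
-/

open Finset DyckStep

namespace CatalanAntichain

open scoped Classical in
/-- The family `𝓕_m` of the statement. -/
noncomputable def layer (m : ℕ) : Finset (Finset ℕ) :=
  (Icc 1 (2 * m)).powerset.filter fun A =>
    A.card = m ∧ ∀ i, 0 < i → i < m → (A ∩ Icc 1 (2 * i)).card < i

lemma mem_layer {m : ℕ} {A : Finset ℕ} :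
    A ∈ layer m ↔ A ⊆ Icc 1 (2 * m) ∧ A.card = m ∧
      ∀ i, 0 < i → i < m → (A ∩ Icc 1 (2 * i)).card < i := by
  classical
  rw [layer, mem_filter, mem_powerset]

lemma layer_one : layer 1 = (Icc 1 2).powersetCard 1 := by
  ext A
  simp only [mem_layer, mem_powersetCard]
  exact ⟨fun h => ⟨h.1, h.2.1⟩, fun h => ⟨h.1, h.2, by omega⟩⟩

lemma card_layer_one : (layer 1).card = 2 := by
  rw [layer_one, card_powersetCard]
  rfl

lemma card_inter_Icc_succ (A : Finset ℕ) (j : ℕ) :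
    (A ∩ Icc 1 (j + 1)).card = (A ∩ Icc 1 j).card + if j + 1 ∈ A then 1 else 0 := by
  rw [← insert_Icc_right_eq_Icc_add_one (by omega)]
  split_ifs with h
  · rw [inter_insert_of_mem h, card_insert_of_notMem (by simp)]
  · rw [inter_insert_of_notMem h, add_zero]

/-- For `m ≥ 2` the ballot condition at the even positions `2i` propagates to the odd ones. -/
lemma mem_layer_iff_forall_two_mul_card_lt {m : ℕ} (hm : 2 ≤ m) {A : Finset ℕ} :
    A ∈ layer m ↔ A ⊆ Icc 1 (2 * m) ∧ A.card = m ∧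
      ∀ j, 0 < j → j < 2 * m → 2 * (A ∩ Icc 1 j).card < j := by
  rw [mem_layer]
  refine and_congr_right fun _ => and_congr_right fun _ =>
    ⟨fun h j hj hjm => ?_, fun h i hi him => by have := h (2 * i) (by omega) (by omega); omega⟩
  obtain ⟨i, rfl | rfl⟩ := Nat.even_or_odd' j
  · have := h i (by omega) (by omega)
    omega
  · have := card_inter_Icc_succ A (2 * i)
    rcases Nat.eq_zero_or_pos i with rfl | hi
    · have h2 : (A ∩ Icc 1 (1 + 1)).card < 1 := h 1 one_pos hm
      have := card_inter_Icc_succ A 1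
      show 2 * (A ∩ Icc 1 1).card < 1
      split_ifs at * <;> omega
    · have := h i hi (by omega)
      split_ifs at * <;> omega

lemma two_mul_mem_of_mem_layer {m : ℕ} (hm : 2 ≤ m) {A : Finset ℕ} (hA : A ∈ layer m) :
    2 * m ∈ A := by
  obtain ⟨hsub, hcard, hlt⟩ := (mem_layer_iff_forall_two_mul_card_lt hm).1 hA
  have := hlt (2 * m - 1) (by omega) (by omega)
  obtain ⟨x, hxA, hx⟩ :=
    exists_mem_notMem_of_card_lt_card (s := A ∩ Icc 1 (2 * m - 1)) (t := A) (by omega)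
  have := mem_Icc.1 (hsub hxA)
  simp only [mem_inter, mem_Icc, not_and, not_le] at hx
  obtain rfl : x = 2 * m := by
    have := hx hxA
    omega
  exact hxA

lemma subset_Icc_iff_of_mem_layer {m n : ℕ} (hm : 1 ≤ m) (hn : 2 ≤ n) {A : Finset ℕ}
    (hA : A ∈ layer m) : A ⊆ Icc 1 n ↔ m ≤ n / 2 := by
  refine ⟨fun h => ?_, fun h => (mem_layer.1 hA).1.trans (Icc_subset_Icc_right (by omega))⟩
  rcases eq_or_lt_of_le hm with rfl | hm
  · omega
  · have := mem_Icc.1 (h (two_mul_mem_of_mem_layer hm hA))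
    omega

lemma count_U_add_count_D (l : List DyckStep) : l.count U + l.count D = l.length := by
  induction l with
  | nil => rfl
  | cons a l ih => cases a <;> simp <;> omega

/-- Letters are indexed from `0` and positions from `1`: letter `j` is `D` iff `j + 1 ∈ A`. -/
def toWord (N : ℕ) (A : Finset ℕ) : List DyckStep :=
  (List.range N).map fun j => if j + 1 ∈ A then D else U

def ofWord (w : List DyckStep) : Finset ℕ :=
  (Icc 1 w.length).filter fun j => w[j - 1]? = some D

@[simp] lemma length_toWord (N : ℕ) (A : Finset ℕ) : (toWord N A).length = N := by
  simp [toWord]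

lemma toWord_ofWord (w : List DyckStep) : toWord w.length (ofWord w) = w := by
  refine List.ext_getElem (length_toWord _ _) fun j _ hj => ?_
  rcases w[j].dichotomy with h | h <;> simp [toWord, ofWord, hj, h]

lemma ofWord_toWord {N : ℕ} {A : Finset ℕ} (hA : A ⊆ Icc 1 N) : ofWord (toWord N A) = A := by
  ext j
  simp only [ofWord, mem_filter, mem_Icc, length_toWord]
  constructor
  · rintro ⟨⟨hj, hjN⟩, hD⟩
    obtain ⟨i, rfl⟩ : ∃ i, j = i + 1 := ⟨j - 1, by omega⟩
    simpa [toWord, show i < N by omega] using hD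
  · intro hjA
    obtain ⟨hj, hjN⟩ := mem_Icc.1 (hA hjA)
    obtain ⟨i, rfl⟩ : ∃ i, j = i + 1 := ⟨j - 1, by omega⟩
    simp [toWord, show i < N by omega, hjA]

lemma count_D_take_toWord {N s : ℕ} (A : Finset ℕ) (hs : s ≤ N) :
    ((toWord N A).take s).count D = (A ∩ Icc 1 s).card := by
  rw [toWord, ← List.map_take, List.take_range, min_eq_left hs]
  induction s with
  | zero => simp
  | succ s ih =>
    rw [List.range_succ, List.map_append, List.count_append, ih (by omega), card_inter_Icc_succ]
    split_ifs <;> simp [*]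

lemma count_U_take_toWord {N s : ℕ} (A : Finset ℕ) (hs : s ≤ N) :
    ((toWord N A).take s).count U = s - (A ∩ Icc 1 s).card := by
  have := count_U_add_count_D ((toWord N A).take s)
  rw [count_D_take_toWord A hs, List.length_take, length_toWord, min_eq_left hs] at this
  omega

lemma count_D_toWord {m : ℕ} {A : Finset ℕ} (hA : A ∈ layer m) :
    (toWord (2 * m) A).count D = m := by
  obtain ⟨hsub, hcard, -⟩ := mem_layer.1 hA
  rw [← List.take_length (l := toWord _ _), count_D_take_toWord A (length_toWord _ _).le,
    length_toWord, inter_eq_left.2 hsub, hcard]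

def layerDyckWord {m : ℕ} (hm : 2 ≤ m) {A : Finset ℕ} (hA : A ∈ layer m) : DyckWord where
  toList := toWord (2 * m) A
  count_U_eq_count_D := by
    have := count_U_add_count_D (toWord (2 * m) A)
    rw [count_D_toWord hA, length_toWord] at this
    rw [count_D_toWord hA]
    omega
  count_D_le_count_U i := by
    obtain ⟨-, -, hlt⟩ := (mem_layer_iff_forall_two_mul_card_lt hm).1 hA
    rcases le_or_gt (2 * m) i with hi | hi
    · rw [List.take_of_length_le (by rwa [length_toWord])]
      have := count_U_add_count_D (toWord (2 * m) A)
      rw [count_D_toWord hA, length_toWord] at this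
      rw [count_D_toWord hA]
      omega
    · rw [count_D_take_toWord A hi.le, count_U_take_toWord A hi.le]
      rcases i.eq_zero_or_pos with rfl | hi0
      · simp
      · have := hlt i hi0 hi
        omega

lemma semilength_layerDyckWord {m : ℕ} (hm : 2 ≤ m) {A : Finset ℕ} (hA : A ∈ layer m) :
    (layerDyckWord hm hA).semilength = m := by
  rw [DyckWord.semilength_eq_count_D]
  exact count_D_toWord hA

lemma isNested_layerDyckWord {m : ℕ} (hm : 2 ≤ m) {A : Finset ℕ} (hA : A ∈ layer m) :
    (layerDyckWord hm hA).IsNested := by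
  obtain ⟨-, -, hlt⟩ := (mem_layer_iff_forall_two_mul_card_lt hm).1 hA
  refine ⟨fun h => ?_, fun i hi0 hi => ?_⟩
  · have := semilength_layerDyckWord hm hA
    rw [h, DyckWord.semilength_zero] at this
    omega
  · simp only [layerDyckWord, length_toWord] at hi ⊢
    rw [count_D_take_toWord A hi.le, count_U_take_toWord A hi.le]
    have := hlt i hi0 hi
    omega

lemma ofWord_mem_layer {m : ℕ} (hm : 2 ≤ m) {p : DyckWord} (hp : p.IsNested)
    (hpm : p.semilength = m) : ofWord p.toList ∈ layer m := by
  have hlen : p.toList.length = 2 * m := by rw [← p.two_mul_semilength_eq_length, hpm]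
  have hword : toWord (2 * m) (ofWord p.toList) = p.toList := hlen ▸ toWord_ofWord p.toList
  have hsub : ofWord p.toList ⊆ Icc 1 (2 * m) := hlen ▸ filter_subset _ _
  have hcount : ∀ j ≤ 2 * m, (ofWord p.toList ∩ Icc 1 j).card = (p.toList.take j).count D :=
    fun j hj => by rw [← count_D_take_toWord _ hj, hword]
  refine (mem_layer_iff_forall_two_mul_card_lt hm).2 ⟨hsub, ?_, fun j hj0 hj => ?_⟩
  · rw [← inter_eq_left.2 hsub, hcount _ le_rfl, ← hlen, List.take_length,
      ← DyckWord.semilength_eq_count_D, hpm]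
  · have h1 := hp.2 hj0 (hlen ▸ hj)
    have h2 := count_U_add_count_D (p.toList.take j)
    rw [List.length_take, hlen, min_eq_left hj.le] at h2
    rw [hcount j hj.le]
    omega

def layerEquivNested {m : ℕ} (hm : 2 ≤ m) :
    layer m ≃ {p : DyckWord // p.IsNested ∧ p.semilength = m} where
  toFun A := ⟨layerDyckWord hm A.2, isNested_layerDyckWord hm A.2, semilength_layerDyckWord hm A.2⟩
  invFun p := ⟨ofWord p.1.toList, ofWord_mem_layer hm p.2.1 p.2.2⟩
  left_inv A := Subtype.ext (ofWord_toWord (mem_layer.1 A.2).1)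
  right_inv p := by
    have hlen : p.1.toList.length = 2 * m := by rw [← p.1.two_mul_semilength_eq_length, p.2.2]
    refine Subtype.ext (DyckWord.ext ?_)
    change toWord (2 * m) _ = _
    rw [← hlen, toWord_ofWord]

def nestEquiv (k : ℕ) :
    {p : DyckWord // p.semilength = k} ≃ {p : DyckWord // p.IsNested ∧ p.semilength = k + 1} where
  toFun p := ⟨p.1.nest, .nest, by rw [DyckWord.semilength_nest, p.2]⟩
  invFun p := ⟨p.1.denest p.2.1, by
    have := p.2.2
    rw [← DyckWord.nest_denest p.1 p.2.1, DyckWord.semilength_nest] at this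
    omega⟩
  left_inv p := Subtype.ext (DyckWord.denest_nest p.1)
  right_inv p := Subtype.ext (DyckWord.nest_denest p.1 p.2.1)

lemma card_layer (k : ℕ) : (layer (k + 2)).card = catalan (k + 1) := by
  rw [← Nat.card_eq_finsetCard,
    Nat.card_congr ((layerEquivNested (by omega)).trans (nestEquiv (k + 1)).symm),
    Nat.card_eq_fintype_card, DyckWord.card_dyckWord_semilength_eq_catalan]

lemma sum_card_layer (K : ℕ) :
    ∑ m ∈ Icc 1 (K + 1), (layer m).card = 1 + ∑ k ∈ range (K + 1), catalan k := by
  induction K with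
  | zero => simp [card_layer_one]
  | succ K ih =>
    rw [sum_Icc_succ_top (by omega), ih, card_layer, sum_range_succ _ (K + 1), add_assoc]

lemma ncard_eq_one_add_sum_catalan {n : ℕ} (hn : 2 ≤ n) :
    {A : Finset ℕ | (∃ m, 1 ≤ m ∧ A ∈ layer m) ∧ A ⊆ Icc 1 n}.ncard =
      1 + ∑ k ∈ range (n / 2), catalan k := by
  have hset : {A : Finset ℕ | (∃ m, 1 ≤ m ∧ A ∈ layer m) ∧ A ⊆ Icc 1 n} =
      ↑((Icc 1 (n / 2)).biUnion layer) := by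
    ext A
    simp only [Set.mem_ofPred_eq, coe_biUnion, coe_Icc, Set.mem_iUnion, Set.mem_Icc, mem_coe,
      exists_prop]
    constructor
    · rintro ⟨⟨m, hm, hA⟩, hAn⟩
      exact ⟨m, ⟨hm, (subset_Icc_iff_of_mem_layer hm hn hA).1 hAn⟩, hA⟩
    · rintro ⟨m, ⟨hm, hmn⟩, hA⟩
      exact ⟨⟨m, hm, hA⟩, (subset_Icc_iff_of_mem_layer hm hn hA).2 hmn⟩
  have hdisj : Set.PairwiseDisjoint ↑(Icc 1 (n / 2)) layer := fun m _ m' _ hmm' =>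
    disjoint_left.2 fun A hA hA' => hmm' ((mem_layer.1 hA).2.1.symm.trans (mem_layer.1 hA').2.1)
  obtain ⟨K, hK⟩ : ∃ K, n / 2 = K + 1 := ⟨n / 2 - 1, by omega⟩
  rw [hset, Set.ncard_coe_finset, card_biUnion hdisj, hK, sum_card_layer]

lemma succ_succ_mul_catalan_succ (k : ℕ) :
    (k + 2) * catalan (k + 1) = 2 * (2 * k + 1) * catalan k := by
  have h := Nat.succ_mul_centralBinom_succ k
  rw [← succ_mul_catalan_eq_centralBinom, ← succ_mul_catalan_eq_centralBinom] at h
  refine Nat.eq_of_mul_eq_mul_left k.succ_pos ?_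
  linarith

lemma catalan_pos (k : ℕ) : 0 < catalan k :=
  Nat.pos_of_mul_pos_left ((succ_mul_catalan_eq_centralBinom k).symm ▸ k.centralBinom_pos)

lemma two_mul_catalan_le_catalan_succ {k : ℕ} (hk : 1 ≤ k) :
    2 * catalan k ≤ catalan (k + 1) := by
  obtain ⟨k, rfl⟩ : ∃ j, k = j + 1 := ⟨k - 1, by omega⟩
  have := succ_succ_mul_catalan_succ (k + 1)
  nlinarith

lemma sum_range_succ_catalan_le (K : ℕ) : ∑ k ∈ range (K + 1), catalan k ≤ 2 * catalan K := by
  induction K with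
  | zero => simp
  | succ K ih =>
    rw [sum_range_succ]
    rcases Nat.eq_zero_or_pos K with rfl | hK
    · simp [catalan_one]
    · linarith [two_mul_catalan_le_catalan_succ hK]

lemma catalan_sq_mul_le (k : ℕ) : catalan k ^ 2 * (k + 1) ^ 3 ≤ 16 ^ k := by
  induction k with
  | zero => simp
  | succ k ih =>
    have poly : 4 * (2 * k + 1) ^ 2 * (k + 2) ≤ 16 * (k + 1) ^ 3 := by nlinarith
    calc catalan (k + 1) ^ 2 * (k + 1 + 1) ^ 3
        = ((k + 2) * catalan (k + 1)) ^ 2 * (k + 2) := by ring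
      _ = 4 * (2 * k + 1) ^ 2 * (k + 2) * catalan k ^ 2 := by
        rw [succ_succ_mul_catalan_succ]; ring
      _ ≤ 16 * (k + 1) ^ 3 * catalan k ^ 2 := Nat.mul_le_mul_right _ poly
      _ = 16 * (catalan k ^ 2 * (k + 1) ^ 3) := by ring
      _ ≤ 16 ^ (k + 1) := by rw [pow_succ' 16 k]; exact Nat.mul_le_mul_left _ ih

lemma sixteen_pow_le_catalan_sq_mul (k : ℕ) :
    16 ^ k ≤ (4 * k + 1) * (k + 1) ^ 2 * catalan k ^ 2 := by
  induction k with
  | zero => simp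
  | succ k ih =>
    have poly : 16 * ((4 * k + 1) * (k + 1) ^ 2) ≤ (4 * k + 5) * (2 * (2 * k + 1)) ^ 2 := by
      nlinarith
    calc 16 ^ (k + 1) = 16 * 16 ^ k := pow_succ' _ _
      _ ≤ 16 * ((4 * k + 1) * (k + 1) ^ 2 * catalan k ^ 2) := Nat.mul_le_mul_left _ ih
      _ = 16 * ((4 * k + 1) * (k + 1) ^ 2) * catalan k ^ 2 := by ring
      _ ≤ (4 * k + 5) * (2 * (2 * k + 1)) ^ 2 * catalan k ^ 2 := Nat.mul_le_mul_right _ poly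
      _ = (4 * (k + 1) + 1) * ((k + 2) * catalan (k + 1)) ^ 2 := by
        rw [succ_succ_mul_catalan_succ]; ring
      _ = (4 * (k + 1) + 1) * (k + 1 + 1) ^ 2 * catalan (k + 1) ^ 2 := by ring

lemma rpow_three_halves_sq {x : ℝ} (hx : 0 ≤ x) : (x ^ ((3 : ℝ) / 2)) ^ 2 = x ^ 3 := by
  rw [← Real.rpow_mul_natCast hx]
  norm_num

lemma catalan_le_four_pow_div (k : ℕ) :
    (catalan k : ℝ) ≤ 4 ^ k / ((k : ℝ) + 1) ^ ((3 : ℝ) / 2) := by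
  rw [le_div_iff₀ (by positivity),
    ← pow_le_pow_iff_left₀ (by positivity) (by positivity) two_ne_zero, mul_pow,
    rpow_three_halves_sq (by positivity), ← pow_mul,
    show (4 : ℝ) ^ (k * 2) = 16 ^ k by rw [pow_mul']; norm_num]
  exact_mod_cast catalan_sq_mul_le k

lemma four_pow_div_le_catalan (k : ℕ) :
    4 ^ k / ((k : ℝ) + 1) ^ ((3 : ℝ) / 2) / 2 ≤ catalan k := by
  rw [div_div, div_le_iff₀ (by positivity),
    ← pow_le_pow_iff_left₀ (by positivity) (by positivity) two_ne_zero, mul_pow, mul_pow,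
    rpow_three_halves_sq (by positivity), ← pow_mul,
    show (4 : ℝ) ^ (k * 2) = 16 ^ k by rw [pow_mul']; norm_num]
  have : (4 * k + 1) * (k + 1) ^ 2 ≤ 4 * (k + 1) ^ 3 := by nlinarith
  calc (16 : ℝ) ^ k ≤ ((4 * k + 1) * (k + 1) ^ 2 * catalan k ^ 2 : ℕ) := by
        exact_mod_cast sixteen_pow_le_catalan_sq_mul k
    _ ≤ (4 * (k + 1) ^ 3 * catalan k ^ 2 : ℕ) := by gcongr
    _ = _ := by push_cast; ring

lemma two_pow_div_le_four_pow_div {n j : ℕ} (hj : n / 2 = j + 1) :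
    2 ^ n / (n : ℝ) ^ ((3 : ℝ) / 2) ≤ 8 * (4 ^ j / ((j : ℝ) + 1) ^ ((3 : ℝ) / 2)) := by
  have hpow : (2 : ℝ) ^ n ≤ 8 * 4 ^ j :=
    calc (2 : ℝ) ^ n ≤ 2 ^ (2 * j + 3) := pow_le_pow_right₀ one_le_two (by omega)
      _ = 8 * 4 ^ j := by rw [pow_add, pow_mul]; norm_num; ring
  have hrpow : ((j : ℝ) + 1) ^ ((3 : ℝ) / 2) ≤ (n : ℝ) ^ ((3 : ℝ) / 2) :=
    Real.rpow_le_rpow (by positivity) (by exact_mod_cast (by omega : j + 1 ≤ n)) (by norm_num)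
  calc 2 ^ n / (n : ℝ) ^ ((3 : ℝ) / 2) ≤ 8 * 4 ^ j / (n : ℝ) ^ ((3 : ℝ) / 2) := by gcongr
    _ ≤ 8 * 4 ^ j / ((j : ℝ) + 1) ^ ((3 : ℝ) / 2) := by gcongr
    _ = _ := mul_div_assoc _ _ _

lemma four_pow_div_le_two_pow_div {n j : ℕ} (hj : n / 2 = j + 1) :
    4 ^ j / ((j : ℝ) + 1) ^ ((3 : ℝ) / 2) ≤ 4 * (2 ^ n / (n : ℝ) ^ ((3 : ℝ) / 2)) := by
  have hpow : 4 * (4 : ℝ) ^ j ≤ 2 ^ n :=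
    calc 4 * (4 : ℝ) ^ j = 2 ^ (2 * j + 2) := by rw [pow_add, pow_mul]; norm_num; ring
      _ ≤ 2 ^ n := pow_le_pow_right₀ one_le_two (by omega)
  have hrpow : (n : ℝ) ^ ((3 : ℝ) / 2) ≤ 16 * ((j : ℝ) + 1) ^ ((3 : ℝ) / 2) :=
    calc (n : ℝ) ^ ((3 : ℝ) / 2) ≤ (4 * ((j : ℝ) + 1)) ^ ((3 : ℝ) / 2) :=
          Real.rpow_le_rpow (by positivity) (by exact_mod_cast (by omega : n ≤ 4 * (j + 1)))
            (by norm_num)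
      _ = 4 ^ ((3 : ℝ) / 2) * ((j : ℝ) + 1) ^ ((3 : ℝ) / 2) :=
          Real.mul_rpow (by norm_num) (by positivity)
      _ ≤ 4 ^ (2 : ℝ) * ((j : ℝ) + 1) ^ ((3 : ℝ) / 2) := by gcongr <;> norm_num
      _ = 16 * ((j : ℝ) + 1) ^ ((3 : ℝ) / 2) := by norm_num
  have hn : (0 : ℝ) < n := by exact_mod_cast (by omega : 0 < n)
  calc 4 ^ j / ((j : ℝ) + 1) ^ ((3 : ℝ) / 2)
        = 16 * 4 ^ j / (16 * ((j : ℝ) + 1) ^ ((3 : ℝ) / 2)) := by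
          rw [mul_div_mul_left _ _ (by norm_num)]
    _ ≤ 16 * 4 ^ j / (n : ℝ) ^ ((3 : ℝ) / 2) := by gcongr
    _ ≤ 4 * 2 ^ n / (n : ℝ) ^ ((3 : ℝ) / 2) :=
          div_le_div_of_nonneg_right (by linarith) (by positivity)
    _ = _ := mul_div_assoc _ _ _

end CatalanAntichain

open CatalanAntichain

/-- For `𝓕 = ⋃_{m ≥ 1} {A ⊆ [2m] : |A| = m, ∀ 0 < i < m, |A ∩ [2i]| < i}`, there are
constants `c, C > 0` with `c · 2^n/n^{3/2} ≤ |𝓕 ∩ 2^[n]| ≤ C · 2^n/n^{3/2}` for all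
sufficiently large `n`. -/
theorem catalan_antichain_growth :
    ∃ c C : ℝ, 0 < c ∧ 0 < C ∧
      ∀ᶠ n : ℕ in Filter.atTop,
        c * (2 ^ n / (n : ℝ) ^ ((3 : ℝ) / 2)) ≤
          (({A : Finset ℕ |
              (∃ m : ℕ, 1 ≤ m ∧ A ⊆ Finset.Icc 1 (2 * m) ∧ A.card = m ∧
                ∀ i, 0 < i → i < m → (A ∩ Finset.Icc 1 (2 * i)).card < i) ∧
              A ⊆ Finset.Icc 1 n}).ncard : ℝ) ∧
        (({A : Finset ℕ |
              (∃ m : ℕ, 1 ≤ m ∧ A ⊆ Finset.Icc 1 (2 * m) ∧ A.card = m ∧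
                ∀ i, 0 < i → i < m → (A ∩ Finset.Icc 1 (2 * i)).card < i) ∧
              A ⊆ Finset.Icc 1 n}).ncard : ℝ) ≤
          C * (2 ^ n / (n : ℝ) ^ ((3 : ℝ) / 2)) := by
  refine ⟨1 / 16, 12, by norm_num, by norm_num, ?_⟩
  filter_upwards [Filter.eventually_ge_atTop 2] with n hn
  obtain ⟨j, hj⟩ : ∃ j, n / 2 = j + 1 := ⟨n / 2 - 1, by omega⟩
  simp_rw [← mem_layer]
  rw [ncard_eq_one_add_sum_catalan hn, hj]
  have hlower : catalan j ≤ 1 + ∑ k ∈ range (j + 1), catalan k :=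
    (single_le_sum (fun _ _ => Nat.zero_le _) (self_mem_range_succ j)).trans (Nat.le_add_left _ _)
  have hupper : 1 + ∑ k ∈ range (j + 1), catalan k ≤ 3 * catalan j := by
    linarith [sum_range_succ_catalan_le j, catalan_pos j]
  have := four_pow_div_le_catalan j
  have := catalan_le_four_pow_div j
  have := two_pow_div_le_four_pow_div hj
  have := four_pow_div_le_two_pow_div hj
  constructor
  · have : (catalan j : ℝ) ≤ (1 + ∑ k ∈ range (j + 1), catalan k : ℕ) := by exact_mod_cast hlower
    linarith
  · have : ((1 + ∑ k ∈ range (j + 1), catalan k : ℕ) : ℝ) ≤ 3 * catalan j := by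
      exact_mod_cast hupper
    linarith
end
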